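/- Let R be a commutative ring, n ≥ 1, Λ = M_{n×n}(R), and let I be a finitely generated left ideal of Λ. Then Fit_Λ(Λ/I) = ⟨det(x) : x ∈ I⟩_R, the R-ideal generated by the determinants (computed in M_{n×n}(R)) of all elements of I. -/

import Mathlib

open Matrix

section FitDefs

variable (R : Type*) [CommRing R]

/-- The ideal of all maximal minors of a rectangular matrix (this is the zero
ideal when there are fewer rows than columns). -/
noncomputable def minorsIdeal {a b : ℕ} (H : Matrix (Fin a) (Fin b) R) : Ideal R :=
  Ideal.span {x : R | ∃ f : Fin b → Fin a, x = ((H.submatrix f id).det)}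

/-- `(H, π)` is a finite presentation `R^a --H--> R^b --π->> M` of the `R`-module `M`,
where `H` acts by right multiplication on row vectors. -/
def IsPresentation {a b : ℕ} (H : Matrix (Fin a) (Fin b) R) (M : Type*)
    [AddCommGroup M] [Module R M] (π : (Fin b → R) →ₗ[R] M) : Prop :=
  Function.Surjective π ∧ LinearMap.ker π = LinearMap.range H.vecMulLinear

/-- The (zeroth) Fitting ideal of an `R`-module, defined as the supremum over all
finite presentations of the ideal of maximal minors; for a finitely presented
module this agrees with the classical Fitting ideal computed from any single
presentation, since the latter is independent of the chosen presentation. -/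
noncomputable def fitIdeal (M : Type*) [AddCommGroup M] [Module R M] : Ideal R :=
  ⨆ (a : ℕ) (b : ℕ) (H : Matrix (Fin a) (Fin b) R) (π : (Fin b → R) →ₗ[R] M)
    (_ : IsPresentation R H M π), minorsIdeal R H

end FitDefs

section MatrixModule

variable (n : ℕ) (R : Type*) [CommRing R] (M : Type*) [AddCommGroup M]
  [Module (Matrix (Fin n) (Fin n) R) M] [Module R M]
  [IsScalarTower R (Matrix (Fin n) (Fin n) R) M]

/-- Left multiplication by the matrix unit `e_{ii}` as an `R`-linear endomorphism
of a module over the matrix ring. -/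
noncomputable def eMul (i : Fin n) : M →ₗ[R] M where
  toFun x := Matrix.single i i (1 : R) • x
  map_add' x y := smul_add _ x y
  map_smul' r x := (smul_comm r (Matrix.single i i (1 : R)) x).symm

/-- The `R`-submodule `e_{ii}M` of a module `M` over the matrix ring. -/
noncomputable def eComponent (i : Fin n) : Submodule R M :=
  LinearMap.range (eMul n R M i)

end MatrixModule

/-!
For a surjection `π : R^b → M`, the ideal `detIdeal (ker π)` generated by the determinants of
`b × b` matrices with rows in `ker π` is the ideal of maximal minors of any relation matrix
(expand the determinant multilinearly in the rows), and it does not depend on `π`. To compare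
`π` with `q : R^c → M`, pass through `π ⊕ q : R^(b+c) → M`: lifting `q` through `π` gives a
unipotent change of coordinates carrying `ker (π ⊕ q)` onto `ker π × R^c`, and Laplace
expansion along the free coordinates shows that they do not change the determinant ideal.

For `M = e₁₁(Λ/I)`, the map sending a row vector `v` to the class of the matrix with first row `v`
is such a surjection. A matrix lies in the left ideal `I` exactly when each of its rows, placed
in the first row, does; so matrices with rows in the kernel are exactly the elements of `I`.
-/

section FittingIdeal

open LinearMap

variable {R : Type*} [CommRing R]

noncomputable def detIdeal {ι : Type*} [Fintype ι] [DecidableEq ι] (K : Submodule R (ι → R)) :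
    Ideal R :=
  Ideal.span {r | ∃ S : Matrix ι ι R, (∀ i, S i ∈ K) ∧ S.det = r}

section detIdeal

variable {ι κ : Type*} [Fintype ι] [DecidableEq ι] [Fintype κ] [DecidableEq κ]

theorem det_mem_detIdeal {K : Submodule R (ι → R)} {S : Matrix ι ι R} (hS : ∀ i, S i ∈ K) :
    S.det ∈ detIdeal K :=
  Ideal.subset_span ⟨S, hS, rfl⟩

theorem detIdeal_le_iff {K : Submodule R (ι → R)} {J : Ideal R} :
    detIdeal K ≤ J ↔ ∀ S : Matrix ι ι R, (∀ i, S i ∈ K) → S.det ∈ J := by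
  simp [detIdeal, Ideal.span_le, Set.subset_def]

theorem detIdeal_map_le (f : (ι → R) →ₗ[R] ι → R) (K : Submodule R (ι → R)) :
    detIdeal (K.map f) ≤ detIdeal K := by
  refine detIdeal_le_iff.mpr fun S hS => ?_
  choose U hUK hUS using fun i => Submodule.mem_map.mp (hS i)
  have hS_eq : S = Matrix.of U * (toMatrix' f)ᵀ := by
    ext i j
    rw [← hUS i, ← toMatrix'_mulVec]
    simp only [Matrix.mul_apply, Matrix.mulVec, dotProduct, Matrix.transpose_apply,
      Matrix.of_apply, mul_comm]
  rw [hS_eq, Matrix.det_mul]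
  exact Ideal.mul_mem_right _ _ (det_mem_detIdeal hUK)

theorem detIdeal_comap_linearEquiv (e : (ι → R) ≃ₗ[R] ι → R) (K : Submodule R (ι → R)) :
    detIdeal (K.comap (e : (ι → R) →ₗ[R] ι → R)) = detIdeal K := by
  refine le_antisymm ?_ ?_
  · rw [Submodule.comap_equiv_eq_map_symm]
    exact detIdeal_map_le _ K
  · conv_lhs => rw [← Submodule.map_comap_eq_of_surjective e.surjective K]
    exact detIdeal_map_le _ _

theorem detIdeal_comap_funLeft (e : ι ≃ κ) (K : Submodule R (ι → R)) :
    detIdeal (K.comap (funLeft R R e)) = detIdeal K := by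
  refine le_antisymm (detIdeal_le_iff.mpr fun S hS => ?_) (detIdeal_le_iff.mpr fun S hS => ?_)
  · rw [← Matrix.det_submatrix_equiv_self e S]
    exact det_mem_detIdeal fun i => hS (e i)
  · rw [← Matrix.det_submatrix_equiv_self e.symm S]
    exact det_mem_detIdeal fun k => by simpa [funLeft, Function.comp_def] using hS (e.symm k)

end detIdeal

theorem detIdeal_comap_castSucc {m : ℕ} (K : Submodule R (Fin m → R)) :
    detIdeal (K.comap (funLeft R R Fin.castSucc)) = detIdeal K := by
  refine le_antisymm (detIdeal_le_iff.mpr fun S hS => ?_) (detIdeal_le_iff.mpr fun S hS => ?_)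
  · rw [Matrix.det_succ_column S (Fin.last m), Fin.succAbove_last]
    exact Ideal.sum_mem _ fun i _ => Ideal.mul_mem_left _ _ (det_mem_detIdeal fun j => hS _)
  · let W := Matrix.reindex finSumFinEquiv finSumFinEquiv
      (Matrix.fromBlocks S 0 0 (1 : Matrix (Fin 1) (Fin 1) R))
    have hW : W.det = S.det := by simp [W]
    rw [← hW]
    refine det_mem_detIdeal fun i => ?_
    rw [Submodule.mem_comap]
    obtain ⟨i | i, rfl⟩ := finSumFinEquiv.surjective i
    · convert hS i using 1
      ext j
      simp [W]
    · convert K.zero_mem using 1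
      ext j
      simp [W]

theorem detIdeal_comap_castAdd {m : ℕ} (K : Submodule R (Fin m → R)) (c : ℕ) :
    detIdeal (K.comap (funLeft R R (Fin.castAdd c))) = detIdeal K := by
  induction c with
  | zero =>
    have hK : K.comap (funLeft R R (Fin.castAdd 0)) = K := Submodule.ext fun v => Iff.rfl
    rw [hK]
  | succ c ih =>
    have hK : K.comap (funLeft R R (Fin.castAdd (c + 1))) =
        (K.comap (funLeft R R (Fin.castAdd c))).comap (funLeft R R Fin.castSucc) :=
      Submodule.ext fun v => Iff.rfl
    rw [hK, detIdeal_comap_castSucc, ih]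

theorem minorsIdeal_eq_detIdeal_range {a b : ℕ} (H : Matrix (Fin a) (Fin b) R) :
    minorsIdeal R H = detIdeal (range H.vecMulLinear) := by
  refine le_antisymm (Ideal.span_le.mpr ?_) (detIdeal_le_iff.mpr fun S hS => ?_)
  · rintro _ ⟨f, rfl⟩
    exact det_mem_detIdeal fun i => ⟨Pi.single (f i) 1, Matrix.single_one_vecMul (f i) H⟩
  · choose C hC using hS
    have hS_eq : S = fun i => ∑ k, C i k • H k := by
      ext i j
      simp [← hC i, Matrix.vecMul, dotProduct]
    have hexpand :
        S.det = ∑ r : Fin b → Fin a, (∏ i, C i (r i)) * (H.submatrix r _root_.id).det := by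
      rw [hS_eq]
      change Matrix.detRowAlternating.toMultilinearMap _ = _
      rw [MultilinearMap.map_sum]
      simp only [MultilinearMap.map_smul_univ, smul_eq_mul]
      rfl
    rw [hexpand]
    exact Ideal.sum_mem _ fun r _ => Ideal.mul_mem_left _ _ (Ideal.subset_span ⟨r, rfl⟩)

section presentation

variable {M : Type*} [AddCommGroup M] [Module R M]

theorem exists_linearEquiv_ker_add_eq_comap {m c : ℕ} {π : (Fin m → R) →ₗ[R] M}
    (hπ : Function.Surjective π) (g : (Fin c → R) →ₗ[R] M) :
    ∃ e : (Fin (m + c) → R) ≃ₗ[R] Fin (m + c) → R,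
      ker (π ∘ₗ funLeft R R (Fin.castAdd c) + g ∘ₗ funLeft R R (Fin.natAdd m)) =
        ((ker π).comap (funLeft R R (Fin.castAdd c))).comap (e : _ →ₗ[R] _) := by
  -- `L` lifts `g` through `π`, so `π ⊕ g` factors as `π ∘ (first m coordinates) ∘ (1 + N)`.
  obtain ⟨L, hL⟩ := Module.projective_lifting_property π g hπ
  let N : Module.End R (Fin (m + c) → R) :=
    Function.ExtendByZero.linearMap R (Fin.castAdd c) ∘ₗ L ∘ₗ funLeft R R (Fin.natAdd m)
  have hN_castAdd (v) : funLeft R R (Fin.castAdd c) (N v) = L (funLeft R R (Fin.natAdd m) v) :=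
    funext fun i => (Fin.castAdd_injective m c).extend_apply _ _ i
  have hN_natAdd (v) : funLeft R R (Fin.natAdd m) (N v) = 0 := by
    refine funext fun j => Function.extend_apply' _ _ _ ?_
    rintro ⟨i, hi⟩
    have := congrArg Fin.val hi
    simp only [Fin.val_castAdd, Fin.val_natAdd] at this
    omega
  have hNN : N * N = 0 := LinearMap.ext fun v => by
    change Function.ExtendByZero.linearMap R _ (L (funLeft R R (Fin.natAdd m) (N v))) = 0
    rw [hN_natAdd, map_zero, map_zero]
  have h₁ : (1 + N) * (1 - N) = 1 := by
    rw [add_mul, mul_sub, mul_sub, hNN, one_mul, one_mul, mul_one]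
    abel
  have h₂ : (1 - N) * (1 + N) = 1 := by
    rw [sub_mul, mul_add, mul_add, hNN, one_mul, one_mul, mul_one]
    abel
  refine ⟨.ofLinearMap (1 + N) (1 - N) h₁ h₂, ?_⟩
  ext v
  simp [hN_castAdd, ← hL]

theorem detIdeal_ker_add {m c : ℕ} {π : (Fin m → R) →ₗ[R] M} (hπ : Function.Surjective π)
    (g : (Fin c → R) →ₗ[R] M) :
    detIdeal (ker (π ∘ₗ funLeft R R (Fin.castAdd c) + g ∘ₗ funLeft R R (Fin.natAdd m))) =
      detIdeal (ker π) := by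
  obtain ⟨e, he⟩ := exists_linearEquiv_ker_add_eq_comap hπ g
  rw [he, detIdeal_comap_linearEquiv, detIdeal_comap_castAdd]

theorem detIdeal_ker_eq_of_surjective {b c : ℕ} {π : (Fin b → R) →ₗ[R] M}
    {q : (Fin c → R) →ₗ[R] M} (hπ : Function.Surjective π) (hq : Function.Surjective q) :
    detIdeal (ker π) = detIdeal (ker q) := by
  have hflip : (ker (π ∘ₗ funLeft R R (Fin.castAdd c) + q ∘ₗ funLeft R R (Fin.natAdd b))).comap
      (funLeft R R finAddFlip) =
        ker (q ∘ₗ funLeft R R (Fin.castAdd b) + π ∘ₗ funLeft R R (Fin.natAdd c)) := by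
    ext v
    simp [funLeft, Function.comp_def, add_comm]
  rw [← detIdeal_ker_add hπ q, ← detIdeal_comap_funLeft finAddFlip, hflip, detIdeal_ker_add hq π]

theorem minorsIdeal_le_fitIdeal {a b : ℕ} {H : Matrix (Fin a) (Fin b) R}
    {π : (Fin b → R) →ₗ[R] M} (h : IsPresentation R H M π) : minorsIdeal R H ≤ fitIdeal R M :=
  le_iSup_of_le a <| le_iSup_of_le b <| le_iSup_of_le H <| le_iSup_of_le π <| le_iSup_of_le h le_rfl

theorem fitIdeal_eq_detIdeal_ker {c : ℕ} {q : (Fin c → R) →ₗ[R] M}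
    (hq : Function.Surjective q) (hfg : (ker q).FG) : fitIdeal R M = detIdeal (ker q) := by
  refine le_antisymm (iSup_le fun a => iSup_le fun b => iSup_le fun H => iSup_le fun π =>
    iSup_le fun hπ => ?_) ?_
  · rw [minorsIdeal_eq_detIdeal_range, ← hπ.2, detIdeal_ker_eq_of_surjective hπ.1 hq]
  · obtain ⟨a, g, hg⟩ := Submodule.fg_iff_exists_fin_generating_family.mp hfg
    have hpres : IsPresentation R (Matrix.of g) M q :=
      ⟨hq, by rw [_root_.range_vecMulLinear, ← hg]; rfl⟩
    rw [hpres.2, ← minorsIdeal_eq_detIdeal_range]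
    exact minorsIdeal_le_fitIdeal hpres

end presentation

section MatrixRing

variable {n : ℕ} (I : Ideal (Matrix (Fin n) (Fin n) R)) (z : Fin n)

theorem mem_leftIdeal_iff_forall_updateRow_mem {x : Matrix (Fin n) (Fin n) R} :
    x ∈ I ↔ ∀ i, updateRow 0 z (x i) ∈ I := by
  refine ⟨fun hx i => ?_, fun h => ?_⟩
  · simpa [single_mul_eq_updateRow_zero, Matrix.row] using I.mul_mem_left (single z i (1 : R)) hx
  · have hx : x = ∑ i, single i z (1 : R) * updateRow 0 z (x i) := by
      ext a b
      simp [single_mul_eq_updateRow_zero, Matrix.sum_apply, updateRow_apply]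
    rw [hx]
    exact I.sum_mem fun i _ => I.mul_mem_left _ (h i)

/-- `v ↦` the class of the matrix with row `z` equal to `v` and all other rows zero. -/
noncomputable def rowToEComponent :
    (Fin n → R) →ₗ[R] eComponent n R (Matrix (Fin n) (Fin n) R ⧸ I) z :=
  codRestrict _ (I.mkQ.restrictScalars R ∘ₗ (ofLinearEquiv R).toLinearMap ∘ₗ
      LinearMap.single R (fun _ => Fin n → R) z)
    fun v => mem_range.mpr ⟨Submodule.Quotient.mk (updateRow 0 z v), by
      change Submodule.Quotient.mk (p := I) (single z z (1 : R) * updateRow 0 z v) =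
        Submodule.Quotient.mk (updateRow 0 z v)
      rw [single_mul_eq_updateRow_zero, one_smul]
      simp [Matrix.row]⟩

theorem rowToEComponent_surjective : Function.Surjective (rowToEComponent I z) := by
  rintro ⟨_, x, rfl⟩
  obtain ⟨w, rfl⟩ := Submodule.Quotient.mk_surjective I x
  refine ⟨w z, Subtype.ext ?_⟩
  change Submodule.Quotient.mk (p := I) (updateRow 0 z (w z)) =
    single z z (1 : R) • Submodule.Quotient.mk (p := I) w
  rw [← Submodule.Quotient.mk_smul, smul_eq_mul, single_mul_eq_updateRow_zero, one_smul]
  rfl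

theorem mem_ker_rowToEComponent {v : Fin n → R} :
    v ∈ ker (rowToEComponent I z) ↔ updateRow 0 z v ∈ I := by
  rw [mem_ker, ← Submodule.coe_eq_zero]
  exact Submodule.Quotient.mk_eq_zero I

theorem ker_rowToEComponent_fg (hI : I.FG) : (ker (rowToEComponent I z)).FG := by
  have hker : ker (rowToEComponent I z) = (I.restrictScalars R).map (LinearMap.proj z) := by
    ext v
    rw [mem_ker_rowToEComponent]
    refine ⟨fun hv => ⟨_, hv, by simp⟩, ?_⟩
    rintro ⟨x, hx, rfl⟩
    exact (mem_leftIdeal_iff_forall_updateRow_mem I z).mp hx z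
  rw [hker]
  exact (Submodule.FG.restrictScalars (R := R) (S := I) hI).map _

theorem detIdeal_ker_rowToEComponent :
    detIdeal (ker (rowToEComponent I z)) = Ideal.span {r : R | ∃ x ∈ I, r = x.det} := by
  simp_rw [detIdeal, mem_ker_rowToEComponent, ← mem_leftIdeal_iff_forall_updateRow_mem, eq_comm]

end MatrixRing

end FittingIdeal

/-- For a finitely generated left ideal `I` of `Λ = M_{n×n}(R)`,
`Fit_Λ(Λ/I) = ⟨det(x) : x ∈ I⟩_R`, the `R`-ideal generated by the determinants
of all elements of `I`. -/
theorem fitIdeal_quotient_leftIdeal (n : ℕ) (hn : 0 < n) (R : Type*) [CommRing R]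
    (I : Ideal (Matrix (Fin n) (Fin n) R)) (hfg : I.FG) :
    fitIdeal R (eComponent n R (Matrix (Fin n) (Fin n) R ⧸ I) ⟨0, hn⟩) =
      Ideal.span {r : R | ∃ x ∈ I, r = x.det} := by
  rw [fitIdeal_eq_detIdeal_ker (rowToEComponent_surjective I _) (ker_rowToEComponent_fg I _ hfg),
    detIdeal_ker_rowToEComponent]
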